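/- Let κ be a regular uncountable cardinal with κ^ω = κ. Every κ-Borel subset of κ^κ is the projection of a κ-closed subset of κ^κ × κ^κ; consequently every κ-Σ¹₁ set (projection of a κ-Borel set) is the projection of a κ-closed set. -/

import Mathlib

open Cardinal Set

universe u v w

namespace GDST

variable {K : Type u} {A : Type v}

/-- The set `N_η` determined by the partial function with domain `Y` and values given by `η`. -/
def nbhd (Y : Set K) (η : K → A) : Set (K → A) := {ζ | ∀ i ∈ Y, ζ i = η i}

/-- Basic κ-open subsets of `K → K`: sets `N_η` where `η` is a partial function with
domain of size `< #K`, together with the empty set. -/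
def IsBasicOpen (S : Set (K → A)) : Prop :=
  (∃ (Y : Set K) (η : K → A), #Y < #K ∧ S = nbhd Y η) ∨ S = ∅

/-- Open in the topology generated by the basic κ-open sets. -/
def IsOpenStd (U : Set (K → A)) : Prop :=
  ∀ ζ ∈ U, ∃ S : Set (K → A), IsBasicOpen S ∧ ζ ∈ S ∧ S ⊆ U

/-- A union of at most `μ` basic κ-open sets; `(κ,μ)`-open. -/
def IsMuOpen (μ : Cardinal.{u}) (U : Set (K → A)) : Prop :=
  ∃ (ι : Type u) (f : ι → Set (K → A)), #ι ≤ μ ∧ (∀ i, IsBasicOpen (f i)) ∧ U = ⋃ i, f i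

/-- `(κ,μ)`-closed: the complement is `(κ,μ)`-open. -/
def IsMuClosed (μ : Cardinal.{u}) (C : Set (K → A)) : Prop := IsMuOpen μ Cᶜ

/-- The `(κ,μ)`-Borel sets: the smallest class containing the basic κ-open sets and closed
under complements and unions and intersections of length at most `μ`. -/
inductive MuBorel (μ : Cardinal.{u}) : Set (K → A) → Prop
  | basic (S : Set (K → A)) : IsBasicOpen S → MuBorel μ S
  | compl (S : Set (K → A)) : MuBorel μ S → MuBorel μ Sᶜ
  | iUnion (ι : Type u) (f : ι → Set (K → A)) : #ι ≤ μ → (∀ i, MuBorel μ (f i)) →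
      MuBorel μ (⋃ i, f i)
  | iInter (ι : Type u) (f : ι → Set (K → A)) : #ι ≤ μ → (∀ i, MuBorel μ (f i)) →
      MuBorel μ (⋂ i, f i)

/-- κ-open: a union of at most `κ = #K` basic κ-open sets. -/
def IsKOpen (U : Set (K → A)) : Prop := IsMuOpen #K U

/-- κ-closed. -/
def IsKClosed (C : Set (K → A)) : Prop := IsMuClosed #K C

/-- κ-Borel. -/
def KBorel (S : Set (K → A)) : Prop := MuBorel #K S

/- Product space versions, for subsets of `(K → A) × (K → B)`. -/
section Prod

variable {B : Type w}

/-- Basic κ-open subsets of the product: products of basic κ-open sets. -/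
def IsBasicOpen2 (S : Set ((K → A) × (K → B))) : Prop :=
  ∃ (S₁ : Set (K → A)) (S₂ : Set (K → B)), IsBasicOpen S₁ ∧ IsBasicOpen S₂ ∧ S = S₁ ×ˢ S₂

def IsOpenStd2 (U : Set ((K → A) × (K → B))) : Prop :=
  ∀ p ∈ U, ∃ S, IsBasicOpen2 S ∧ p ∈ S ∧ S ⊆ U

def IsMuOpen2 (μ : Cardinal.{u}) (U : Set ((K → A) × (K → B))) : Prop :=
  ∃ (ι : Type u) (f : ι → Set ((K → A) × (K → B))),
    #ι ≤ μ ∧ (∀ i, IsBasicOpen2 (f i)) ∧ U = ⋃ i, f i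

def IsMuClosed2 (μ : Cardinal.{u}) (C : Set ((K → A) × (K → B))) : Prop := IsMuOpen2 μ Cᶜ

inductive MuBorel2 (μ : Cardinal.{u}) : Set ((K → A) × (K → B)) → Prop
  | basic (S : Set ((K → A) × (K → B))) : IsBasicOpen2 S → MuBorel2 μ S
  | compl (S : Set ((K → A) × (K → B))) : MuBorel2 μ S → MuBorel2 μ Sᶜ
  | iUnion (ι : Type u) (f : ι → Set ((K → A) × (K → B))) : #ι ≤ μ → (∀ i, MuBorel2 μ (f i)) →
      MuBorel2 μ (⋃ i, f i)
  | iInter (ι : Type u) (f : ι → Set ((K → A) × (K → B))) : #ι ≤ μ → (∀ i, MuBorel2 μ (f i)) →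
      MuBorel2 μ (⋂ i, f i)

def IsKOpen2 (U : Set ((K → A) × (K → B))) : Prop := IsMuOpen2 #K U

def IsKClosed2 (C : Set ((K → A) × (K → B))) : Prop := IsMuClosed2 #K C

def KBorel2 (S : Set ((K → A) × (K → B))) : Prop := MuBorel2 #K S

/-- κ-Σ¹₁ : projections of κ-Borel subsets of the product. -/
def KSigma11 (S : Set (K → A)) : Prop :=
  ∃ C : Set ((K → A) × (K → A)), KBorel2 C ∧ S = Prod.fst '' C

end Prod

end GDST

/-! Call a set *projectively κ-closed* if it is the projection of a κ-closed subset of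
`κ^κ × κ^κ`. Basic open sets are κ-closed, and the class is closed under unions and
intersections of length `κ`: a single witness can code an index together with a witness for
the chosen set, or `κ` witnesses at once along a partition of `κ` into `κ` pieces. Induction
on κ-Borel sets, carrying the complement along, gives the first claim. For a κ-Σ¹₁ set
`pr₁ C`, pull `C` back along a pairing bijection `κ^κ × κ^κ ≃ κ^κ` that maps basic open sets
to basic open sets; the resulting κ-Borel subset of `κ^κ` is projectively κ-closed, and the
coordinate paired with the first one is absorbed into the witness. -/
open Function

namespace GDST

section BasicOpen

variable {K : Type u} {A : Type v}

theorem isBasicOpen_empty : IsBasicOpen (∅ : Set (K → A)) := Or.inr rfl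

theorem isBasicOpen_univ [Nonempty K] [Nonempty A] : IsBasicOpen (univ : Set (K → A)) :=
  Or.inl ⟨∅, fun _ => Classical.arbitrary A, by simp [pos_iff_ne_zero, mk_ne_zero K],
    by ext; simp [nbhd]⟩

theorem IsBasicOpen.inter [Infinite K] {S T : Set (K → A)} (hS : IsBasicOpen S)
    (hT : IsBasicOpen T) : IsBasicOpen (S ∩ T) := by
  classical
  rcases hS with ⟨Y₁, η₁, hY₁, rfl⟩ | rfl
  swap; · simpa using isBasicOpen_empty
  rcases hT with ⟨Y₂, η₂, hY₂, rfl⟩ | rfl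
  swap; · simpa using isBasicOpen_empty
  by_cases hcompat : ∀ k ∈ Y₁, k ∈ Y₂ → η₁ k = η₂ k
  · refine Or.inl ⟨Y₁ ∪ Y₂, fun k => if k ∈ Y₁ then η₁ k else η₂ k,
      (mk_union_le _ _).trans_lt (add_lt_of_lt (aleph0_le_mk K) hY₁ hY₂), ?_⟩
    ext ζ
    simp only [nbhd, mem_inter_iff, mem_ofPred_eq, mem_union]
    grind
  · push Not at hcompat
    obtain ⟨k, hk₁, hk₂, hne⟩ := hcompat
    refine Or.inr (eq_empty_of_forall_notMem fun ζ ⟨h₁, h₂⟩ => hne ?_)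
    rw [← h₁ k hk₁, h₂ k hk₂]

theorem IsBasicOpen.preimage_comp [Nonempty K] {g : K → K} (hg : Injective g)
    {S : Set (K → A)} (hS : IsBasicOpen S) : IsBasicOpen ((· ∘ g) ⁻¹' S) := by
  rcases hS with ⟨Y, η, hY, rfl⟩ | rfl
  · refine Or.inl ⟨g '' Y, η ∘ invFun g, by rwa [mk_image_eq hg], ?_⟩
    ext ζ
    simp [nbhd, leftInverse_invFun hg _]
  · exact isBasicOpen_empty

end BasicOpen

section BasicOpen2

variable {K : Type u} {A : Type v} {B : Type w}

theorem IsBasicOpen2.inter [Infinite K] {S T : Set ((K → A) × (K → B))} (hS : IsBasicOpen2 S)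
    (hT : IsBasicOpen2 T) : IsBasicOpen2 (S ∩ T) := by
  obtain ⟨S₁, S₂, hS₁, hS₂, rfl⟩ := hS
  obtain ⟨T₁, T₂, hT₁, hT₂, rfl⟩ := hT
  exact ⟨_, _, hS₁.inter hT₁, hS₂.inter hT₂, prod_inter_prod⟩

theorem IsBasicOpen2.preimage_map_id_comp [Nonempty K] {g : K → K} (hg : Injective g)
    {S : Set ((K → A) × (K → B))} (hS : IsBasicOpen2 S) :
    IsBasicOpen2 (Prod.map id (· ∘ g) ⁻¹' S) := by
  obtain ⟨S₁, S₂, hS₁, hS₂, rfl⟩ := hS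
  exact ⟨S₁, _, hS₁, hS₂.preimage_comp hg, preimage_prod_map_prod _ _ _ _⟩

theorem isKClosed2_iInter [Infinite K] {ι : Type u} (hι : #ι ≤ #K)
    {C : ι → Set ((K → A) × (K → B))} (hC : ∀ i, IsKClosed2 (C i)) :
    IsKClosed2 (⋂ i, C i) := by
  choose J f hJ hf hCf using hC
  refine ⟨Σ i, J i, fun s => f s.1 s.2, ?_, fun s => hf s.1 s.2, ?_⟩
  · calc #(Σ i, J i) = sum fun i => #(J i) := mk_sigma J
      _ ≤ sum fun _ : ι => #K := sum_le_sum _ _ hJ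
      _ = #ι * #K := sum_const' _ _
      _ ≤ #K * #K := mul_le_mul_left hι _
      _ = #K := mul_eq_self (aleph0_le_mk K)
  · rw [compl_iInter, iUnion_sigma]
    simp only [hCf]

theorem IsKClosed2.compl_union [Infinite K] {O D : Set ((K → A) × (K → B))}
    (hO : IsBasicOpen2 O) (hD : IsKClosed2 D) : IsKClosed2 (Oᶜ ∪ D) := by
  obtain ⟨ι, f, hι, hf, hDf⟩ := hD
  exact ⟨ι, fun i => O ∩ f i, hι, fun i => hO.inter (hf i),
    by rw [Set.compl_union, compl_compl, hDf, inter_iUnion]⟩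

theorem IsKClosed2.preimage {A' : Type*} {B' : Type*}
    {F : (K → A) × (K → B) → (K → A') × (K → B')}
    (hF : ∀ S, IsBasicOpen2 S → IsBasicOpen2 (F ⁻¹' S)) {C : Set ((K → A') × (K → B'))}
    (hC : IsKClosed2 C) : IsKClosed2 (F ⁻¹' C) := by
  obtain ⟨ι, f, hι, hf, hCf⟩ := hC
  exact ⟨ι, fun i => F ⁻¹' f i, hι, fun i => hF _ (hf i),
    by rw [← preimage_compl, hCf, preimage_iUnion]⟩

theorem KBorel2.preimage {A' : Type*} {F : (K → A') → (K → A) × (K → B)}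
    (hF : ∀ S, IsBasicOpen2 S → IsBasicOpen (F ⁻¹' S)) {C : Set ((K → A) × (K → B))}
    (hC : KBorel2 C) : KBorel (F ⁻¹' C) := by
  induction hC with
  | basic S hS => exact .basic _ (hF S hS)
  | compl S _ ih => exact .compl _ ih
  | iUnion ι f hι _ ih => rw [preimage_iUnion]; exact .iUnion _ _ hι ih
  | iInter ι f hι _ ih => rw [preimage_iInter]; exact .iInter _ _ hι ih

end BasicOpen2

section Projection

variable {K : Type u}

theorem IsBasicOpen.isKClosed [Infinite K] {S : Set (K → K)} (hS : IsBasicOpen S) :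
    IsKClosed S := by
  rcases hS with ⟨Y, η, -, rfl⟩ | rfl
  · refine ⟨{p : K × K // p.1 ∈ Y ∧ p.2 ≠ η p.1}, fun p => nbhd {p.1.1} fun _ => p.1.2,
      ?_, fun p => Or.inl ⟨_, _, ?_, rfl⟩, ?_⟩
    · exact (mk_subtype_le _).trans (mul_eq_self (aleph0_le_mk K)).le
    · simpa using one_lt_aleph0.trans_le (aleph0_le_mk K)
    · ext ζ
      simp [nbhd]
  · refine ⟨PUnit, fun _ => Set.univ, ?_, fun _ => isBasicOpen_univ,
      by rw [compl_empty, iUnion_const]⟩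
    simpa using one_lt_aleph0.le.trans (aleph0_le_mk K)

def IsProjKClosed (X : Set (K → K)) : Prop :=
  ∃ C : Set ((K → K) × (K → K)), IsKClosed2 C ∧ X = Prod.fst '' C

theorem IsKClosed.isProjKClosed [Nonempty K] {X : Set (K → K)} (hX : IsKClosed X) :
    IsProjKClosed X := by
  obtain ⟨ι, f, hι, hf, hXf⟩ := hX
  refine ⟨X ×ˢ Set.univ, ⟨ι, fun i => f i ×ˢ Set.univ, hι,
    fun i => ⟨_, _, hf i, isBasicOpen_univ, rfl⟩, ?_⟩, (fst_image_prod _ univ_nonempty).symm⟩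
  rw [← iUnion_prod_const, ← hXf]
  ext
  simp

theorem IsBasicOpen.isProjKClosed [Infinite K] {S : Set (K → K)} (hS : IsBasicOpen S) :
    IsProjKClosed S :=
  hS.isKClosed.isProjKClosed

theorem IsKClosed2.preimage_map_id_comp [Nonempty K] {g : K → K} (hg : Injective g)
    {C : Set ((K → K) × (K → K))} (hC : IsKClosed2 C) :
    IsKClosed2 (Prod.map id (· ∘ g) ⁻¹' C) :=
  hC.preimage fun _ hS => hS.preimage_map_id_comp hg

theorem isProjKClosed_iUnion_self [Infinite K] {X : K → Set (K → K)}
    (hX : ∀ a, IsProjKClosed (X a)) : IsProjKClosed (⋃ a, X a) := by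
  obtain ⟨e⟩ : Nonempty (Option K ≃ K) :=
    Cardinal.eq.1 (by simp [add_one_eq (aleph0_le_mk K)])
  choose C hC hXC using hX
  have hg : Injective (e ∘ some) := e.injective.comp (Option.some_injective K)
  refine ⟨⋂ a, (Set.univ ×ˢ nbhd {e none} fun _ => a)ᶜ ∪ Prod.map id (· ∘ e ∘ some) ⁻¹' C a,
    isKClosed2_iInter le_rfl fun a => IsKClosed2.compl_union
      ⟨_, _, isBasicOpen_univ, Or.inl ⟨_, _, ?_, rfl⟩, rfl⟩ ((hC a).preimage_map_id_comp hg), ?_⟩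
  · simpa using one_lt_aleph0.trans_le (aleph0_le_mk K)
  ext x
  simp only [mem_iUnion, hXC, mem_image, Prod.exists, mem_iInter, mem_union, mem_compl_iff,
    mem_prod, mem_univ, true_and, nbhd, mem_singleton_iff, forall_eq, mem_preimage, Prod.map,
    id, exists_and_right, exists_eq_right]
  constructor
  · rintro ⟨a, y, hy⟩
    refine ⟨fun k => (e.symm k).elim a y, fun b => not_or_of_imp fun hb => ?_⟩
    obtain rfl : a = b := by simpa using hb
    simpa [comp_def] using hy
  · rintro ⟨z, hz⟩
    exact ⟨z (e none), z ∘ e ∘ some, by simpa using hz (z (e none))⟩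

theorem isProjKClosed_iInter_self [Infinite K] {X : K → Set (K → K)}
    (hX : ∀ a, IsProjKClosed (X a)) : IsProjKClosed (⋂ a, X a) := by
  obtain ⟨p⟩ : Nonempty (K × K ≃ K) := Cardinal.eq.1 (mul_eq_self (aleph0_le_mk K))
  choose C hC hXC using hX
  refine ⟨⋂ a, Prod.map id (· ∘ fun m => p (a, m)) ⁻¹' C a, isKClosed2_iInter le_rfl fun a =>
    (hC a).preimage_map_id_comp (p.injective.comp (Prod.mk_right_injective a)), ?_⟩
  ext x
  simp only [mem_iInter, hXC, mem_image, Prod.exists, mem_preimage, Prod.map, id,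
    exists_and_right, exists_eq_right]
  constructor
  · intro h
    choose y hy using h
    exact ⟨fun k => y (p.symm k).1 (p.symm k).2, fun a => by simpa [comp_def] using hy a⟩
  · rintro ⟨z, hz⟩ a
    exact ⟨_, hz a⟩

theorem exists_surjective_of_mk_le {ι : Type u} [Nonempty ι] (h : #ι ≤ #K) :
    ∃ s : K → ι, Surjective s :=
  let ⟨j⟩ := h
  ⟨invFun j, invFun_surjective j.injective⟩

theorem isProjKClosed_iUnion [Infinite K] {ι : Type u} (hι : #ι ≤ #K) {X : ι → Set (K → K)}
    (hX : ∀ i, IsProjKClosed (X i)) : IsProjKClosed (⋃ i, X i) := by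
  cases isEmpty_or_nonempty ι
  · rw [iUnion_of_empty]
    exact isBasicOpen_empty.isProjKClosed
  · obtain ⟨s, hs⟩ := exists_surjective_of_mk_le hι
    rw [← hs.iUnion_comp]
    exact isProjKClosed_iUnion_self fun a => hX (s a)

theorem isProjKClosed_iInter [Infinite K] {ι : Type u} (hι : #ι ≤ #K) {X : ι → Set (K → K)}
    (hX : ∀ i, IsProjKClosed (X i)) : IsProjKClosed (⋂ i, X i) := by
  cases isEmpty_or_nonempty ι
  · rw [iInter_of_empty]
    exact isBasicOpen_univ.isProjKClosed
  · obtain ⟨s, hs⟩ := exists_surjective_of_mk_le hι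
    rw [← hs.iInter_comp]
    exact isProjKClosed_iInter_self fun a => hX (s a)

theorem KBorel.isProjKClosed_and_compl [Infinite K] {X : Set (K → K)} (hX : KBorel X) :
    IsProjKClosed X ∧ IsProjKClosed Xᶜ := by
  induction hX with
  | basic S hS =>
    obtain ⟨ι, f, hι, hf, hSf⟩ := hS.isKClosed
    exact ⟨hS.isProjKClosed, hSf ▸ isProjKClosed_iUnion hι fun i => (hf i).isProjKClosed⟩
  | compl S _ ih => exact ⟨ih.2, (compl_compl S).symm ▸ ih.1⟩
  | iUnion ι f hι _ ih =>
    exact ⟨isProjKClosed_iUnion hι fun i => (ih i).1,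
      compl_iUnion f ▸ isProjKClosed_iInter hι fun i => (ih i).2⟩
  | iInter ι f hι _ ih =>
    exact ⟨isProjKClosed_iInter hι fun i => (ih i).1,
      compl_iInter f ▸ isProjKClosed_iUnion hι fun i => (ih i).2⟩

end Projection

section Pairing

variable {K : Type u} {A : Type v}

def pairEquiv (e : K ⊕ K ≃ K) : (K → A) × (K → A) ≃ (K → A) :=
  (Equiv.sumArrowEquivProdArrow K K A).symm.trans (e.arrowCongr (Equiv.refl A))

@[simp]
theorem pairEquiv_apply_inl (e : K ⊕ K ≃ K) (x y : K → A) (m : K) :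
    pairEquiv e (x, y) (e (.inl m)) = x m := by
  simp [pairEquiv]

@[simp]
theorem pairEquiv_apply_inr (e : K ⊕ K ≃ K) (x y : K → A) (m : K) :
    pairEquiv e (x, y) (e (.inr m)) = y m := by
  simp [pairEquiv]

theorem preimage_pairEquiv_nbhd (e : K ⊕ K ≃ K) (Y : Set K) (η : K → A) :
    pairEquiv e ⁻¹' nbhd Y η =
      nbhd (e ∘ .inl ⁻¹' Y) (η ∘ e ∘ .inl) ×ˢ nbhd (e ∘ .inr ⁻¹' Y) (η ∘ e ∘ .inr) := by
  ext ⟨x, y⟩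
  simp only [nbhd, mem_preimage, mem_ofPred_eq, mem_prod, comp_apply]
  rw [← e.forall_congr_right]
  simp [Sum.forall]

theorem IsBasicOpen.preimage_pairEquiv (e : K ⊕ K ≃ K) {S : Set (K → A)} (hS : IsBasicOpen S) :
    IsBasicOpen2 (pairEquiv e ⁻¹' S) := by
  rcases hS with ⟨Y, η, hY, rfl⟩ | rfl
  · refine ⟨_, _, Or.inl ⟨_, _, ?_, rfl⟩, Or.inl ⟨_, _, ?_, rfl⟩, preimage_pairEquiv_nbhd e Y η⟩
    · exact (mk_preimage_of_injective _ _ (e.injective.comp Sum.inl_injective)).trans_lt hY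
    · exact (mk_preimage_of_injective _ _ (e.injective.comp Sum.inr_injective)).trans_lt hY
  · exact ⟨∅, ∅, isBasicOpen_empty, isBasicOpen_empty, by simp⟩

theorem IsBasicOpen2.preimage_pairEquiv_symm [Infinite K] (e : K ⊕ K ≃ K)
    {S : Set ((K → A) × (K → A))} (hS : IsBasicOpen2 S) :
    IsBasicOpen ((pairEquiv e).symm ⁻¹' S) := by
  obtain ⟨S₁, S₂, hS₁, hS₂, rfl⟩ := hS
  exact (hS₁.preimage_comp (e.injective.comp Sum.inl_injective)).inter
    (hS₂.preimage_comp (e.injective.comp Sum.inr_injective))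

/-- `pairAssoc e (x, ⟨y, w⟩) = (⟨x, y⟩, w)`, where `⟨·, ·⟩` is `pairEquiv e`. -/
def pairAssoc (e : K ⊕ K ≃ K) (q : (K → A) × (K → A)) : (K → A) × (K → A) :=
  (pairEquiv e (q.1, ((pairEquiv e).symm q.2).1), ((pairEquiv e).symm q.2).2)

theorem IsBasicOpen2.preimage_pairAssoc [Infinite K] (e : K ⊕ K ≃ K)
    {S : Set ((K → A) × (K → A))} (hS : IsBasicOpen2 S) :
    IsBasicOpen2 (pairAssoc e ⁻¹' S) := by
  obtain ⟨S₁, S₂, hS₁, hS₂, rfl⟩ := hS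
  obtain ⟨T₁, T₂, hT₁, hT₂, hS₁T⟩ := hS₁.preimage_pairEquiv e
  refine ⟨T₁, _, hT₁, IsBasicOpen2.preimage_pairEquiv_symm e ⟨_, _, hT₂, hS₂, rfl⟩, ?_⟩
  ext ⟨x, v⟩
  have hx := Set.ext_iff.1 hS₁T (x, ((pairEquiv e).symm v).1)
  simp only [mem_preimage, mem_prod] at hx
  simp only [pairAssoc, mem_preimage, mem_prod, hx, and_assoc]

end Pairing

theorem IsProjKClosed.exists_pairEquiv {K : Type u} [Infinite K] (e : K ⊕ K ≃ K)
    {X : Set (K → K)} (hX : IsProjKClosed X) :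
    IsProjKClosed {x | ∃ y, pairEquiv e (x, y) ∈ X} := by
  obtain ⟨D, hD, rfl⟩ := hX
  refine ⟨pairAssoc e ⁻¹' D, hD.preimage fun _ hS => hS.preimage_pairAssoc e, ?_⟩
  ext x
  simp only [mem_ofPred_eq, mem_image, mem_preimage, Prod.exists, exists_and_right,
    exists_eq_right]
  exact ⟨fun ⟨y, w, h⟩ => ⟨pairEquiv e (y, w), by simpa [pairAssoc] using h⟩,
    fun ⟨_, h⟩ => ⟨_, _, h⟩⟩

theorem KSigma11.isProjKClosed {K : Type u} [Infinite K] {S : Set (K → K)} (hS : KSigma11 S) :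
    IsProjKClosed S := by
  obtain ⟨C, hC, rfl⟩ := hS
  obtain ⟨e⟩ : Nonempty (K ⊕ K ≃ K) := Cardinal.eq.1 (by simp [add_eq_self (aleph0_le_mk K)])
  have hB : KBorel ((pairEquiv e).symm ⁻¹' C) :=
    hC.preimage fun _ hS => hS.preimage_pairEquiv_symm e
  convert hB.isProjKClosed_and_compl.1.exists_pairEquiv e using 1
  ext x
  simp

theorem statement13_general (K : Type u) (hunc : ℵ₀ < #K) :
    (∀ X : Set (K → K), KBorel X →
      ∃ C : Set ((K → K) × (K → K)), IsKClosed2 C ∧ X = Prod.fst '' C) ∧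
    (∀ S : Set (K → K), KSigma11 S →
      ∃ C : Set ((K → K) × (K → K)), IsKClosed2 C ∧ S = Prod.fst '' C) := by
  have : Infinite K := Cardinal.infinite_iff.2 hunc.le
  exact ⟨fun X hX => hX.isProjKClosed_and_compl.1, fun S hS => hS.isProjKClosed⟩

/-- Let κ be regular uncountable with κ^ω = κ. Every κ-Borel subset of κ^κ
is the projection of a κ-closed subset of κ^κ × κ^κ; consequently every κ-Σ¹₁ set is the
projection of a κ-closed set. -/
theorem statement13 (K : Type u) (hreg : (#K).IsRegular) (hunc : ℵ₀ < #K)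
    (hpow : (#K) ^ (ℵ₀ : Cardinal.{u}) = #K) :
    (∀ X : Set (K → K), KBorel X →
      ∃ C : Set ((K → K) × (K → K)), IsKClosed2 C ∧ X = Prod.fst '' C) ∧
    (∀ S : Set (K → K), KSigma11 S →
      ∃ C : Set ((K → K) × (K → K)), IsKClosed2 C ∧ S = Prod.fst '' C) :=
  statement13_general K hunc

end GDST
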